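/- arXiv:1311.6638 — 6 statements merged into one kernel-verified Lean document; each statement's English description precedes it below -/
import Mathlib

section
/- Let an instance have n bidders, m items, and nonnegative real valuations V_{ij}, and let S ≥ 1, K ≥ 1 be integers with m ≥ S and 2K ≥ m − S + 2 (so that K·S + K − 1 ≥ m). Form the extended instance by adding K·S + K − 1 − m new items, where every original bidder values every new item at 0 (new bidders, if added, value every original item at 0). Then for every partition of the m original items into at most S nonempty bundles with welfare W, there exists a K-anonymous scheme of the extended instance (a partition of all K·S + K − 1 items into bundles each of size at least K) whose welfare is at least W. In particular, the optimal K-anonymous welfare OPT′ of the extended instance is at least the optimal welfare OPT of the original instance over schemes with at most S bundles. -/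
open Finset

/-- The welfare of a bundling scheme `P` (a partition of the `m` items into
nonempty bundles): the sum over bundles of the maximum, over bidders, of the
bidder's total value for the bundle. -/
noncomputable def welfare {n m : ℕ} (V : Fin n → Fin m → ℝ)
    (P : Finpartition (univ : Finset (Fin m))) : ℝ :=
  ∑ b ∈ P.parts, ⨆ i, ∑ j ∈ b, V i j

/-- A scheme is `K`-anonymous if every bundle contains at least `K` items. -/
def KAnonymous {m : ℕ} (K : ℕ) (P : Finpartition (univ : Finset (Fin m))) : Prop :=
  ∀ b ∈ P.parts, K ≤ b.card


/-- Distribute the elements of `X` among the members of a nonempty finite set `s`,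
giving each `b ∈ s` at least `needs b` elements, provided `X` is big enough. -/
lemma distribute {β γ : Type*} [DecidableEq β] [DecidableEq γ] (needs : β → ℕ)
    (s : Finset β) (hs : s.Nonempty) :
    ∀ X : Finset γ, (∑ b ∈ s, needs b) ≤ X.card →
    ∃ f : β → Finset γ, (∀ b ∈ s, needs b ≤ (f b).card) ∧ (∀ b ∈ s, f b ⊆ X) ∧
      (↑s : Set β).PairwiseDisjoint f ∧ s.biUnion f = X := by
  induction s using Finset.cons_induction with
  | empty => exact absurd rfl hs.ne_empty
  | cons a s ha ih =>
    intro X hX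
    rw [Finset.sum_cons] at hX
    by_cases hsne : s = ∅
    · subst hsne
      refine ⟨fun _ => X, fun b hb => ?_, fun b _ => subset_rfl, ?_, ?_⟩
      · have hb' : b = a := by simpa using hb
        subst hb'; simpa using hX
      · intro x hx y hy hxy
        simp only [Finset.coe_cons, Finset.coe_empty] at hx hy
        rw [Set.insert_eq, Set.union_empty, Set.mem_singleton_iff] at hx hy
        exact absurd (hx.trans hy.symm) hxy
      · simp
    · have hsne' : s.Nonempty := Finset.nonempty_iff_ne_empty.2 hsne
      obtain ⟨Y, hYX, hYcard⟩ :=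
        Finset.exists_subset_card_eq (le_trans (Nat.le_add_right _ _) hX)
      have hcard : (∑ b ∈ s, needs b) ≤ (X \ Y).card := by
        rw [Finset.card_sdiff_of_subset hYX, hYcard]
        omega
      obtain ⟨f', h1, h2, h3, h4⟩ := ih hsne' (X \ Y) hcard
      have hne : ∀ b ∈ s, b ≠ a := fun b hb h => ha (h ▸ hb)
      refine ⟨Function.update f' a Y, ?_, ?_, ?_, ?_⟩
      · intro b hb
        rcases Finset.mem_cons.1 hb with rfl | hb
        · rw [Function.update_self, hYcard]
        · rw [Function.update_of_ne (hne b hb)]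
          exact h1 b hb
      · intro b hb
        rcases Finset.mem_cons.1 hb with rfl | hb
        · rw [Function.update_self]; exact hYX
        · rw [Function.update_of_ne (hne b hb)]
          exact (h2 b hb).trans (Finset.sdiff_subset)
      · intro x hx y hy hxy
        simp only [Finset.coe_cons, Set.mem_insert_iff, Finset.mem_coe] at hx hy
        have hYd : ∀ c ∈ s, Disjoint Y (f' c) := fun c hc =>
          Finset.disjoint_of_subset_right (h2 c hc) Finset.disjoint_sdiff
        rcases hx with rfl | hx
        · rcases hy with rfl | hy
          · exact absurd rfl hxy
          · show Disjoint (Function.update f' x Y x) (Function.update f' x Y y)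
            rw [Function.update_self, Function.update_of_ne (hne y hy)]
            exact hYd y hy
        · rcases hy with rfl | hy
          · show Disjoint (Function.update f' y Y x) (Function.update f' y Y y)
            rw [Function.update_self, Function.update_of_ne (hne x hx)]
            exact (hYd x hx).symm
          · show Disjoint (Function.update f' a Y x) (Function.update f' a Y y)
            rw [Function.update_of_ne (hne x hx), Function.update_of_ne (hne y hy)]
            exact h3 hx hy hxy
      · rw [Finset.cons_eq_insert, Finset.biUnion_insert, Function.update_self]
        have heq : s.biUnion (Function.update f' a Y) = s.biUnion f' := by
          apply Finset.biUnion_congr rfl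
          intro b hb
          rw [Function.update_of_ne (hne b hb)]
        rw [heq, h4]
        exact Finset.union_sdiff_of_subset hYX

/-- Extend an instance with `n` bidders, `m` items and
nonnegative valuations `V` (where `S ≥ 1`, `K ≥ 1`, `m ≥ S`,
`2K ≥ m - S + 2`, so `K·S + K - 1 ≥ m`) to `K·S + K - 1` items, every
original bidder valuing every new item at `0`.  Then every partition of the
original items into at most `S` (nonempty) bundles can be matched by a
`K`-anonymous scheme of the extended instance with at least the same
welfare. -/
theorem stmt3 (n m S K : ℕ) (hS : 1 ≤ S) (hK : 1 ≤ K) (hmS : S ≤ m)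
    (h2K : (m : ℤ) - (S : ℤ) + 2 ≤ 2 * (K : ℤ))
    (V : Fin n → Fin m → ℝ) (hV : ∀ i j, 0 ≤ V i j)
    (P : Finpartition (univ : Finset (Fin m))) (hP : P.parts.card ≤ S) :
    ∃ Q : Finpartition (univ : Finset (Fin (K * S + K - 1))),
      KAnonymous K Q ∧
      welfare V P ≤
        welfare (fun i (j : Fin (K * S + K - 1)) =>
          if h : (j : ℕ) < m then V i ⟨(j : ℕ), h⟩ else 0) Q := by
  classical
  have hmM : m ≤ K * S + K - 1 := by
    have h1 : (1:ℤ) ≤ K := by exact_mod_cast hK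
    have h2 : (1:ℤ) ≤ S := by exact_mod_cast hS
    have h3 : (m:ℤ) + 1 ≤ K * S + K := by
      nlinarith [mul_nonneg (sub_nonneg.2 h1) (sub_nonneg.2 h2)]
    have h4 : m + 1 ≤ K * S + K := by exact_mod_cast h3
    omega
  set M := K * S + K - 1 with hMdef
  set emb : Fin m ↪ Fin M := Fin.castLEEmb hmM with hemb
  set O : Finset (Fin M) := univ.map emb with hOdef
  have hO : ∀ x : Fin M, x ∈ O ↔ (x : ℕ) < m := by
    intro x
    simp only [hOdef, Finset.mem_map, Finset.mem_univ, true_and]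
    constructor
    · rintro ⟨j, rfl⟩
      simpa [hemb] using j.2
    · intro hx
      exact ⟨⟨(x : ℕ), hx⟩, by ext; simp [hemb]⟩
  set X : Finset (Fin M) := univ \ O with hXdef
  have hXmem : ∀ x : Fin M, x ∈ X ↔ ¬ (x : ℕ) < m := by
    intro x
    simp [hXdef, hO x]
  have hXcard : X.card = M - m := by
    rw [hXdef, Finset.card_sdiff_of_subset (Finset.subset_univ O)]
    simp [hOdef]
  -- key counting inequality
  have hsum : ∑ b ∈ P.parts, b.card = m := by
    simpa using P.sum_card_parts
  have key : ∑ b ∈ P.parts, (K - b.card) ≤ X.card := by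
    rw [hXcard, hMdef]
    by_cases hall : ∀ b ∈ P.parts, b.card < K
    · have h1 : ∑ b ∈ P.parts, (K - b.card) + ∑ b ∈ P.parts, b.card
          = P.parts.card * K := by
        rw [← Finset.sum_add_distrib]
        rw [Finset.sum_congr rfl fun b hb => Nat.sub_add_cancel (le_of_lt (hall b hb))]
        simp [mul_comm]
      rw [hsum] at h1
      have h2 : P.parts.card * K ≤ S * K := Nat.mul_le_mul_right K hP
      have h3 : S * K = K * S := mul_comm S K
      omega
    · push_neg at hall
      obtain ⟨b0, hb0, hb0K⟩ := hall
      have h0 : K - b0.card = 0 := Nat.sub_eq_zero_of_le hb0K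
      have hsplit : ∑ b ∈ P.parts, (K - b.card)
          = ∑ b ∈ P.parts.erase b0, (K - b.card) := by
        rw [← Finset.add_sum_erase _ _ hb0, h0, zero_add]
      have hle : ∑ b ∈ P.parts.erase b0, (K - b.card)
          ≤ (P.parts.card - 1) * (K - 1) := by
        calc ∑ b ∈ P.parts.erase b0, (K - b.card)
            ≤ (P.parts.erase b0).card • (K - 1) := by
              apply Finset.sum_le_card_nsmul
              intro b hb
              have h1 : 1 ≤ b.card :=
                Finset.card_pos.2 (P.nonempty_of_mem_parts (Finset.mem_of_mem_erase hb))
              omega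
          _ = (P.parts.card - 1) * (K - 1) := by
              rw [Finset.card_erase_of_mem hb0, smul_eq_mul]
      have h2 : (P.parts.card - 1) * (K - 1) ≤ (S - 1) * (K - 1) :=
        Nat.mul_le_mul_right _ (by omega)
      have e : (S - 1) * (K - 1) + S + K = K * S + 1 := by
        obtain ⟨s, rfl⟩ := Nat.exists_eq_add_of_le hS
        obtain ⟨k, rfl⟩ := Nat.exists_eq_add_of_le hK
        simp [Nat.add_sub_cancel_left]
        ring
      omega
  have hPne : P.parts.Nonempty := by
    have hm0 : 0 < m := by omega
    have : Nonempty (Fin m) := ⟨⟨0, hm0⟩⟩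
    exact P.parts_nonempty Finset.univ_nonempty.ne_empty
  obtain ⟨f, hf1, hf2, hf3, hf4⟩ := distribute (fun b => K - b.card) P.parts hPne X key
  set g : Finset (Fin m) → Finset (Fin M) := fun b => b.map emb ∪ f b with hgdef
  have hdisjOX : Disjoint O X := Finset.disjoint_sdiff
  have hmapO : ∀ b : Finset (Fin m), b.map emb ⊆ O := fun b =>
    Finset.map_subset_map.2 (Finset.subset_univ b)
  have hgdisj : ∀ b ∈ P.parts, Disjoint (b.map emb) (f b) := fun b hb =>
    hdisjOX.mono (hmapO b) (hf2 b hb)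
  have hginj : ∀ b ∈ P.parts, ∀ b' ∈ P.parts, g b = g b' → b = b' := by
    intro b hb b' hb' h
    have hcap : ∀ c ∈ P.parts, (g c) ∩ O = c.map emb := by
      intro c hc
      rw [hgdef]
      simp only
      rw [Finset.union_inter_distrib_right,
        Finset.inter_eq_left.2 (hmapO c),
        Finset.disjoint_iff_inter_eq_empty.1 (hdisjOX.symm.mono_left (hf2 c hc)),
        Finset.union_empty]
    have h2 : b.map emb = b'.map emb := by
      rw [← hcap b hb, ← hcap b' hb', h]
    exact Finset.map_injective emb h2
  have hgg : ∀ b ∈ P.parts, ∀ b' ∈ P.parts, b ≠ b' → Disjoint (g b) (g b') := by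
    intro b hb b' hb' hne
    rw [hgdef]
    simp only [Finset.disjoint_union_left, Finset.disjoint_union_right]
    refine ⟨⟨?_, ?_⟩, ?_, ?_⟩
    · exact (Finset.disjoint_map emb).2 (P.disjoint hb hb' hne)
    · exact (hdisjOX.mono (hmapO b') (hf2 b hb)).symm
    · exact hdisjOX.mono (hmapO b) (hf2 b' hb')
    · exact hf3 hb hb' hne
  set Qparts : Finset (Finset (Fin M)) := P.parts.image g with hQpdef
  have hQsup : Qparts.sup id = (univ : Finset (Fin M)) := by
    rw [hQpdef, Finset.sup_image]
    apply Finset.eq_univ_iff_forall.2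
    intro x
    rw [Finset.mem_sup]
    by_cases hx : (x : ℕ) < m
    · obtain ⟨b, hb, hjb⟩ := P.exists_mem (Finset.mem_univ (⟨(x : ℕ), hx⟩ : Fin m))
      refine ⟨b, hb, ?_⟩
      have : x ∈ b.map emb := by
        rw [Finset.mem_map]
        exact ⟨⟨(x : ℕ), hx⟩, hjb, by ext; simp [hemb]⟩
      exact Finset.mem_union_left _ this
    · have hxX : x ∈ X := (hXmem x).2 hx
      rw [← hf4, Finset.mem_biUnion] at hxX
      obtain ⟨b, hb, hxb⟩ := hxX
      exact ⟨b, hb, Finset.mem_union_right _ hxb⟩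
  have hQindep : Qparts.SupIndep id := by
    rw [Finset.supIndep_iff_pairwiseDisjoint]
    intro u hu v hv huv
    rw [Finset.coe_image, Set.mem_image] at hu hv
    obtain ⟨b, hb, rfl⟩ := hu
    obtain ⟨b', hb', rfl⟩ := hv
    have hbb' : b ≠ b' := fun h => huv (by rw [h])
    exact hgg b hb b' hb' hbb'
  have hQbot : ⊥ ∉ Qparts := by
    rw [hQpdef]
    intro h
    rw [Finset.mem_image] at h
    obtain ⟨b, hb, hgb⟩ := h
    obtain ⟨j, hj⟩ := P.nonempty_of_mem_parts hb
    have : emb j ∈ g b := Finset.mem_union_left _ (Finset.mem_map_of_mem _ hj)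
    rw [hgb] at this
    simp at this
  refine ⟨⟨Qparts, hQindep, hQsup, hQbot⟩, ?_, ?_⟩
  · intro b' hb'
    simp only [hQpdef, Finset.mem_image] at hb'
    obtain ⟨b, hb, rfl⟩ := hb'
    rw [hgdef]
    simp only
    rw [Finset.card_union_of_disjoint (hgdisj b hb), Finset.card_map]
    have := hf1 b hb
    omega
  · apply le_of_eq
    unfold welfare
    simp only
    rw [hQpdef, Finset.sum_image hginj]
    apply Finset.sum_congr rfl
    intro b hb
    apply iSup_congr
    intro i
    rw [hgdef]
    simp only
    rw [Finset.sum_union (hgdisj b hb), Finset.sum_map]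
    have hz : ∑ j ∈ f b, (if h : (j : Fin M) < m then V i ⟨(j : ℕ), h⟩ else 0) = 0 := by
      apply Finset.sum_eq_zero
      intro j hj
      exact dif_neg ((hXmem j).1 (hf2 b hb hj))
    rw [hz, add_zero]
    apply Finset.sum_congr rfl
    intro j hj
    have hj2 : ((emb j : Fin M) : ℕ) < m := by simp [hemb]
    rw [dif_pos hj2]
    have hjj : (⟨((emb j : Fin M) : ℕ), hj2⟩ : Fin m) = j := by
      ext
      simp [hemb]
    rw [hjj]
end

section
/- Let an instance have n bidders, m ≥ 1 items, and nonnegative integer valuations V_{ij}, and let S ≥ 1, K ≥ 1 be integers with m ≥ S and 2K ≥ m − S + 2. Form the extended instance by adding K·S + K − 1 − m new items and equally many new bidders, where every original bidder values every new item at 0, new bidder t values new item t at 1/S and values every other item at 0. Let OPT be the maximum welfare over partitions of the m original items into at most S nonempty bundles. Then every K-anonymous scheme of the extended instance has welfare at most OPT + 1. -/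
open Finset

/-- The extended instance of the hardness reduction: `K·S + K - 1 - m` new
items and equally many new bidders are added.  Original bidder `i` keeps the
values `V i j` on original items and values new items at `0`; new bidder `t`
(the bidder of index `n + t`) values the new item of index `m + t` at `1/S`
and every other item at `0`. -/
noncomputable def extendedV (n m S K : ℕ) (V : Fin n → Fin m → ℕ) :
    Fin (n + (K * S + K - 1 - m)) → Fin (K * S + K - 1) → ℝ :=
  fun i j =>
    if hi : (i : ℕ) < n then
      (if hj : (j : ℕ) < m then (V ⟨(i : ℕ), hi⟩ ⟨(j : ℕ), hj⟩ : ℝ) else 0)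
    else
      (if (j : ℕ) = m + ((i : ℕ) - n) then 1 / (S : ℝ) else 0)

/-- With `n` bidders, `m ≥ 1` items, nonnegative integer
valuations `V`, and `S ≥ 1`, `K ≥ 1`, `m ≥ S`, `2K ≥ m - S + 2`, every
`K`-anonymous scheme of the extended instance has welfare at most `OPT + 1`,
where `OPT` is the maximum welfare over partitions of the original `m` items
into at most `S` nonempty bundles: i.e., for every `K`-anonymous scheme `Q`
of the extended instance there is a partition `P` of the original items with
at most `S` bundles whose welfare is within `1` of the welfare of `Q`. -/
theorem stmt4 (n m S K : ℕ) (hm : 1 ≤ m) (hS : 1 ≤ S) (hK : 1 ≤ K) (hmS : S ≤ m)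
    (h2K : (m : ℤ) - (S : ℤ) + 2 ≤ 2 * (K : ℤ))
    (V : Fin n → Fin m → ℕ)
    (Q : Finpartition (univ : Finset (Fin (K * S + K - 1))))
    (hQ : KAnonymous K Q) :
    ∃ P : Finpartition (univ : Finset (Fin m)),
      P.parts.card ≤ S ∧
      welfare (extendedV n m S K V) Q ≤ welfare (fun i j => (V i j : ℝ)) P + 1 := by
  classical
  have hprod : K + S ≤ K * S + 1 := by
    obtain ⟨k, hk⟩ := Nat.exists_eq_add_of_le hK
    obtain ⟨s, hs⟩ := Nat.exists_eq_add_of_le hS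
    have : K * S = 1 + k + s + k * s := by subst hk hs; ring
    omega
  have hmN : m ≤ K * S + K - 1 := by omega
  set e : Fin m → Fin (K * S + K - 1) := fun j => Fin.castLE hmN j with he'
  have he : Function.Injective e := Fin.castLE_injective hmN
  set r : Finset (Fin (K * S + K - 1)) → Finset (Fin m) :=
    fun b => b.preimage e he.injOn with hr
  have hrdisj : ∀ b b' : Finset (Fin (K * S + K - 1)),
      Disjoint b b' → Disjoint (r b) (r b') := by
    intro b b' h
    rw [Finset.disjoint_left] at h ⊢
    intro a ha hb
    simp only [r, Finset.mem_preimage] at ha hb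
    exact h ha hb
  have hQcard : Q.parts.card ≤ S := by
    have hsum : ∑ b ∈ Q.parts, b.card = K * S + K - 1 := by
      rw [Q.sum_card_parts]; simp
    have hKc : K * Q.parts.card ≤ K * S + K - 1 := by
      calc K * Q.parts.card = ∑ _b ∈ Q.parts, K := by
            rw [Finset.sum_const, smul_eq_mul, mul_comm]
        _ ≤ ∑ b ∈ Q.parts, b.card := Finset.sum_le_sum fun b hb => hQ b hb
        _ = K * S + K - 1 := hsum
    by_contra hc
    push_neg at hc
    have hx : K * (S + 1) = K * S + K := by ring
    have : K * (S + 1) ≤ K * Q.parts.card := Nat.mul_le_mul_left K hc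
    omega
  have hsupindep : (Q.parts.image r).SupIndep id := by
    rw [Finset.supIndep_iff_pairwiseDisjoint]
    intro x hx y hy hxy
    simp only [Finset.coe_image, Set.mem_image, Finset.mem_coe] at hx hy
    obtain ⟨b, hb, rfl⟩ := hx
    obtain ⟨b', hb', rfl⟩ := hy
    have hbb' : b ≠ b' := fun h => hxy (by rw [h])
    exact hrdisj b b' (Q.disjoint hb hb' hbb')
  have hsupparts : (Q.parts.image r).sup id = (univ : Finset (Fin m)) := by
    apply Finset.eq_univ_iff_forall.mpr
    intro j
    have hj : e j ∈ (univ : Finset (Fin (K * S + K - 1))) := Finset.mem_univ _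
    rw [← Q.sup_parts, Finset.mem_sup] at hj
    obtain ⟨b, hb, hjb⟩ := hj
    rw [Finset.mem_sup]
    exact ⟨r b, Finset.mem_image_of_mem r hb, by simp only [id_eq, r, Finset.mem_preimage]; exact hjb⟩
  refine ⟨Finpartition.ofErase (Q.parts.image r) hsupindep hsupparts, ?_, ?_⟩
  · calc ((Q.parts.image r).erase ⊥).card ≤ (Q.parts.image r).card :=
          Finset.card_le_card (Finset.erase_subset _ _)
      _ ≤ Q.parts.card := Finset.card_image_le
      _ ≤ S := hQcard
  · set g : Finset (Fin m) → ℝ := fun c => ⨆ i : Fin n, ∑ j ∈ c, (V i j : ℝ) with hg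
    have hgnonneg : ∀ c, 0 ≤ g c := by
      intro c
      rcases isEmpty_or_nonempty (Fin n) with h | h
      · simp [g, Real.iSup_of_isEmpty]
      · obtain ⟨i⟩ := h
        refine le_trans ?_ (le_ciSup (Finite.bddAbove_range _) i)
        exact Finset.sum_nonneg fun j _ => by positivity
    have hgempty : g ∅ = 0 := by
      rcases isEmpty_or_nonempty (Fin n) with h | h
      · simp [g, Real.iSup_of_isEmpty]
      · simp [g, ciSup_const]
    have hSpos : (0:ℝ) < S := by exact_mod_cast hS
    have hbundle : ∀ b ∈ Q.parts,
        (⨆ i, ∑ j ∈ b, extendedV n m S K V i j) ≤ g (r b) + 1 / S := by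
      intro b _
      rcases isEmpty_or_nonempty (Fin (n + (K * S + K - 1 - m))) with h | h
      · rw [Real.iSup_of_isEmpty]
        have := hgnonneg (r b); positivity
      · apply ciSup_le
        intro i
        by_cases hi : (i : ℕ) < n
        · have hzero : ∀ x ∈ b, x ∉ Set.range e → extendedV n m S K V i x = 0 := by
            intro x _ hx
            have hxm : ¬ ((x : ℕ) < m) := fun hlt => hx ⟨⟨(x : ℕ), hlt⟩, Fin.ext rfl⟩
            simp [extendedV, hi, hxm]
          have hsum : ∑ j ∈ r b, extendedV n m S K V i (e j)
              = ∑ j ∈ b, extendedV n m S K V i j :=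
            Finset.sum_preimage e b he.injOn (fun x => extendedV n m S K V i x) hzero
          have hval : ∀ j ∈ r b, extendedV n m S K V i (e j)
              = (V ⟨(i : ℕ), hi⟩ j : ℝ) := by
            intro j _
            simp [extendedV, hi, e, j.isLt]
          have : ∑ j ∈ b, extendedV n m S K V i j
              = ∑ j ∈ r b, (V ⟨(i : ℕ), hi⟩ j : ℝ) := by
            rw [← hsum]; exact Finset.sum_congr rfl hval
          rw [this]
          have hle : ∑ j ∈ r b, (V ⟨(i : ℕ), hi⟩ j : ℝ) ≤ g (r b) :=
            le_ciSup (f := fun i : Fin n => ∑ j ∈ r b, (V i j : ℝ))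
              (Finite.bddAbove_range _) (⟨(i : ℕ), hi⟩ : Fin n)
          have : (0:ℝ) ≤ 1 / S := by positivity
          linarith
        · have heq : ∀ j ∈ b, extendedV n m S K V i j
              = if ((j : ℕ) = m + ((i : ℕ) - n)) then 1 / (S : ℝ) else 0 := by
            intro j _; simp [extendedV, hi]
          have hle : ∑ j ∈ b, extendedV n m S K V i j ≤ 1 / S := by
            rw [Finset.sum_congr rfl heq]
            by_cases hc : m + ((i : ℕ) - n) < K * S + K - 1
            · have hiff : ∀ j : Fin (K * S + K - 1),
                  ((j : ℕ) = m + ((i : ℕ) - n)) ↔ j = ⟨m + ((i : ℕ) - n), hc⟩ := by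
                intro j
                constructor
                · intro h; exact Fin.val_injective h
                · intro h; rw [h]
              simp only [hiff]
              rw [Finset.sum_ite_eq' b (⟨m + ((i : ℕ) - n), hc⟩ : Fin (K * S + K - 1))
                (fun _ => 1 / (S : ℝ))]
              split_ifs
              · exact le_refl _
              · positivity
            · have hz : ∀ j ∈ b,
                  (if ((j : ℕ) = m + ((i : ℕ) - n)) then 1 / (S : ℝ) else 0) = 0 := by
                intro j _
                rw [if_neg]
                intro h
                exact hc (h ▸ j.isLt)
              rw [Finset.sum_congr rfl hz, Finset.sum_const, smul_zero]
              positivity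
          have := hgnonneg (r b)
          linarith
    have hinj : ∀ b ∈ Q.parts.filter (fun b => r b ≠ ∅),
        ∀ b' ∈ Q.parts.filter (fun b => r b ≠ ∅), r b = r b' → b = b' := by
      intro b hb b' hb' hrr
      simp only [Finset.mem_filter] at hb hb'
      by_contra hne
      have hd := hrdisj b b' (Q.disjoint hb.1 hb'.1 hne)
      rw [hrr, disjoint_self, Finset.bot_eq_empty] at hd
      exact hb'.2 hd
    have himg : (Q.parts.filter (fun b => r b ≠ ∅)).image r = (Q.parts.image r).erase ⊥ := by
      ext c
      simp only [Finset.mem_image, Finset.mem_filter, Finset.mem_erase, Finset.bot_eq_empty]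
      constructor
      · rintro ⟨b, ⟨hb, hne⟩, rfl⟩; exact ⟨hne, b, hb, rfl⟩
      · rintro ⟨hne, b, hb, rfl⟩; exact ⟨b, ⟨hb, hne⟩, rfl⟩
    have hwP : welfare (fun i j => (V i j : ℝ))
        (Finpartition.ofErase (Q.parts.image r) hsupindep hsupparts)
        = ∑ b ∈ Q.parts, g (r b) := by
      rw [welfare]
      simp only [Finpartition.ofErase_parts]
      rw [← himg, Finset.sum_image hinj]
      rw [← Finset.sum_filter_add_sum_filter_not Q.parts (fun b => r b ≠ ∅) (fun b => g (r b))]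
      have hz : ∑ b ∈ Q.parts.filter (fun b => ¬ r b ≠ ∅), g (r b) = 0 := by
        apply Finset.sum_eq_zero
        intro b hb
        simp only [Finset.mem_filter, not_not] at hb
        rw [hb.2, hgempty]
      rw [hz, add_zero]
    calc welfare (extendedV n m S K V) Q
        ≤ ∑ b ∈ Q.parts, (g (r b) + 1 / S) := Finset.sum_le_sum hbundle
      _ = (∑ b ∈ Q.parts, g (r b)) + Q.parts.card * (1 / S) := by
          rw [Finset.sum_add_distrib, Finset.sum_const, nsmul_eq_mul]
      _ ≤ (∑ b ∈ Q.parts, g (r b)) + 1 := by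
          have : (Q.parts.card : ℝ) * (1 / S) ≤ S * (1 / S) := by
            apply mul_le_mul_of_nonneg_right
            · exact_mod_cast hQcard
            · positivity
          have hSS : (S : ℝ) * (1 / S) = 1 := by field_simp
          linarith
      _ = welfare (fun i j => (V i j : ℝ))
          (Finpartition.ofErase (Q.parts.image r) hsupindep hsupparts) + 1 := by rw [hwP]
end

section
/- Let an instance have n bidders, m items, and nonnegative real valuations V_{ij}, and let K be an integer with 1 ≤ K ≤ m. Then for every partition of the m items into at most ⌊m/K⌋ nonempty bundles with welfare W, there exists a K-anonymous scheme (a partition of the m items into bundles each of size at least K) with welfare at least W/2. -/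
open Finset

/-- Welfare of a single bundle: the best bidder's value for it. -/
noncomputable def bw {n m : ℕ} (V : Fin n → Fin m → ℝ) (b : Finset (Fin m)) : ℝ :=
  ⨆ i, ∑ j ∈ b, V i j

lemma bw_nonneg {n m : ℕ} (V : Fin n → Fin m → ℝ) (hV : ∀ i j, 0 ≤ V i j)
    (b : Finset (Fin m)) : 0 ≤ bw V b :=
  Real.iSup_nonneg fun i => Finset.sum_nonneg fun j _ => hV i j

lemma le_bw {n m : ℕ} (V : Fin n → Fin m → ℝ) (b : Finset (Fin m)) (i : Fin n) :
    ∑ j ∈ b, V i j ≤ bw V b := by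
  unfold bw
  exact le_ciSup (f := fun i : Fin n => ∑ j ∈ b, V i j)
    (Set.Finite.bddAbove (Set.finite_range _)) i

lemma bw_mono {n m : ℕ} (V : Fin n → Fin m → ℝ) (hV : ∀ i j, 0 ≤ V i j)
    {b b' : Finset (Fin m)} (h : b ⊆ b') : bw V b ≤ bw V b' := by
  refine Real.iSup_le (fun i => ?_) (bw_nonneg V hV b')
  calc ∑ j ∈ b, V i j ≤ ∑ j ∈ b', V i j :=
        Finset.sum_le_sum_of_subset_of_nonneg h (fun j _ _ => hV i j)
    _ ≤ bw V b' := le_bw V b' i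

lemma bw_union_le {n m : ℕ} (V : Fin n → Fin m → ℝ) (hV : ∀ i j, 0 ≤ V i j)
    {X Y : Finset (Fin m)} (hd : Disjoint X Y) : bw V (X ∪ Y) ≤ bw V X + bw V Y := by
  refine Real.iSup_le (fun i => ?_) (add_nonneg (bw_nonneg V hV X) (bw_nonneg V hV Y))
  rw [Finset.sum_union hd]
  exact add_le_add (le_bw V X i) (le_bw V Y i)

set_option maxHeartbeats 2000000 in
/-- Main repacking lemma: any pairwise-disjoint family `A` of nonempty bundles with
`K·|A| ≤ ∑ sizes` can be repacked into bundles of size ≥ K with the same union,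
losing at most half the welfare. -/
lemma repack {n m : ℕ} (V : Fin n → Fin m → ℝ) (hV : ∀ i j, 0 ≤ V i j) (K : ℕ) (hK : 1 ≤ K) :
    ∀ N (A : Finset (Finset (Fin m))), A.card ≤ N → (∅ : Finset (Fin m)) ∉ A →
    (A : Set (Finset (Fin m))).PairwiseDisjoint id →
    K * A.card ≤ ∑ a ∈ A, a.card →
    ∃ Q : Finset (Finset (Fin m)), (∅ : Finset (Fin m)) ∉ Q ∧
      (Q : Set (Finset (Fin m))).PairwiseDisjoint id ∧
      Q.sup id = A.sup id ∧ (∀ q ∈ Q, K ≤ q.card) ∧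
      ∑ a ∈ A, bw V a ≤ 2 * ∑ q ∈ Q, bw V q := by
  intro N
  induction N with
  | zero =>
    intro A hcard _ _ _
    have hA : A = ∅ := Finset.card_eq_zero.mp (Nat.le_zero.mp hcard)
    subst hA
    exact ⟨∅, by simp, by simp, rfl, by simp, by simp⟩
  | succ N IH =>
    intro A hcard hAne0 hdisj hcount
    by_cases hbase : ∀ a ∈ A, K ≤ a.card
    · refine ⟨A, hAne0, hdisj, rfl, hbase, ?_⟩
      have h0 : (0:ℝ) ≤ ∑ a ∈ A, bw V a :=
        Finset.sum_nonneg (fun a _ => bw_nonneg V hV a)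
      linarith
    · push_neg at hbase
      obtain ⟨c, hcA, hcK⟩ := hbase
      have hAne : A.Nonempty := ⟨c, hcA⟩
      -- there is a big part
      have hbig : ∃ b ∈ A, K ≤ b.card := by
        by_contra hb
        push_neg at hb
        have hlt : ∑ a ∈ A, a.card < ∑ _a ∈ A, K :=
          Finset.sum_lt_sum_of_nonempty hAne (fun a ha => hb a ha)
        rw [Finset.sum_const, smul_eq_mul] at hlt
        have h2 : K * A.card < A.card * K := lt_of_le_of_lt hcount hlt
        rw [mul_comm] at h2
        exact lt_irrefl _ h2
      obtain ⟨b, hbA, hbK⟩ := hbig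
      have hbc : b ≠ c := by
        intro h; subst h; omega
      have hbec : b ∈ A.erase c := Finset.mem_erase.mpr ⟨hbc, hbA⟩
      set rest : Finset (Finset (Fin m)) := (A.erase c).erase b with hrestdef
      have hmem_rest : ∀ a ∈ rest, a ∈ A ∧ a ≠ b ∧ a ≠ c := by
        intro a ha
        rw [hrestdef, Finset.mem_erase, Finset.mem_erase] at ha
        exact ⟨ha.2.2, ha.1, ha.2.1⟩
      -- sum and card bookkeeping
      have hsum1 : ∑ a ∈ A.erase c, a.card + c.card = ∑ a ∈ A, a.card :=
        Finset.sum_erase_add _ _ hcA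
      have hsum2 : ∑ a ∈ rest, a.card + b.card = ∑ a ∈ A.erase c, a.card :=
        Finset.sum_erase_add _ _ hbec
      have hsw1 : ∑ a ∈ A.erase c, bw V a + bw V c = ∑ a ∈ A, bw V a :=
        Finset.sum_erase_add _ _ hcA
      have hsw2 : ∑ a ∈ rest, bw V a + bw V b = ∑ a ∈ A.erase c, bw V a :=
        Finset.sum_erase_add _ _ hbec
      have hc1 : (A.erase c).card = A.card - 1 := Finset.card_erase_of_mem hcA
      have hc2 : rest.card = (A.erase c).card - 1 := Finset.card_erase_of_mem hbec
      have hpos : 0 < (A.erase c).card := Finset.card_pos.mpr ⟨b, hbec⟩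
      have hA1 : 1 ≤ A.card := Finset.card_pos.mpr hAne
      have hcb : Disjoint c b := hdisj hcA hbA (fun h => hbc h.symm)
      have hcne : c ≠ ∅ := fun h => hAne0 (h ▸ hcA)
      by_cases hserve : 2 * K ≤ b.card + c.card
      · -- serve: carve X ⊆ b of size K - |c| and output c ∪ X
        have hXex : K - c.card ≤ b.card := le_trans (Nat.sub_le K c.card) hbK
        obtain ⟨X, hXb, hXcard⟩ := Finset.exists_subset_card_eq hXex
        have hXle : X.card ≤ b.card := Finset.card_le_card hXb
        have hbXcard : (b \ X).card = b.card - X.card := Finset.card_sdiff_of_subset hXb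
        have hbXK : K ≤ (b \ X).card := by omega
        have hbXne : b \ X ≠ ∅ := by
          intro h
          rw [h] at hbXK; simp at hbXK; omega
        have hbXnotin : b \ X ∉ rest := by
          intro h
          obtain ⟨hmem, hneb, _⟩ := hmem_rest _ h
          have hdj : Disjoint (b \ X) b := hdisj hmem hbA hneb
          have : b \ X = ⊥ := disjoint_self.mp (hdj.mono_right Finset.sdiff_subset)
          exact hbXne this
        set A' : Finset (Finset (Fin m)) := insert (b \ X) rest with hA'def
        have hA'card : A'.card = rest.card + 1 := Finset.card_insert_of_notMem hbXnotin
        have hswA' : ∑ a ∈ A', bw V a = bw V (b \ X) + ∑ a ∈ rest, bw V a :=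
          Finset.sum_insert hbXnotin
        have hsA' : ∑ a ∈ A', a.card = (b \ X).card + ∑ a ∈ rest, a.card :=
          Finset.sum_insert hbXnotin
        have hAc' : A'.card + 1 = A.card := by omega
        have hKA : K * A.card = K * A'.card + K := by
          rw [← hAc', Nat.mul_succ]
        -- apply IH
        have hA'ne0 : (∅ : Finset (Fin m)) ∉ A' := by
          rw [hA'def, Finset.mem_insert]
          rintro (h | h)
          · exact hbXne h.symm
          · exact hAne0 (hmem_rest _ h).1
        have hrestdisj : (rest : Set (Finset (Fin m))).PairwiseDisjoint id :=
          hdisj.subset (fun x hx => (hmem_rest x hx).1)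
        have hA'disj : (A' : Set (Finset (Fin m))).PairwiseDisjoint id := by
          rw [hA'def, Finset.coe_insert]
          refine hrestdisj.insert (fun j hj hne => ?_)
          obtain ⟨hjA, hjb, _⟩ := hmem_rest j hj
          exact ((hdisj hbA hjA (fun h => hjb h.symm)).mono_left Finset.sdiff_subset)
        have hA'count : K * A'.card ≤ ∑ a ∈ A', a.card := by omega
        obtain ⟨Q', hQ'ne, hQ'disj, hQ'sup, hQ'K, hQ'w⟩ :=
          IH A' (by omega) hA'ne0 hA'disj hA'count
        -- the new bundle c ∪ X
        have hcX : Disjoint c X := hcb.mono_right hXb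
        have hcXcard : (c ∪ X).card = K := by
          rw [Finset.card_union_of_disjoint hcX]; omega
        have hcXne : c ∪ X ≠ ∅ := by
          intro h
          have := Finset.card_empty (α := Fin m)
          rw [h] at hcXcard; simp at hcXcard; omega
        have hdisjcX : Disjoint (c ∪ X) (A'.sup id) := by
          rw [Finset.disjoint_sup_right]
          intro a ha
          rw [hA'def, Finset.mem_insert] at ha
          rcases ha with rfl | ha
          · rw [Finset.disjoint_union_left]
            exact ⟨hcb.mono_right Finset.sdiff_subset, Finset.disjoint_sdiff⟩
          · obtain ⟨haA, hab, hac⟩ := hmem_rest a ha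
            rw [Finset.disjoint_union_left]
            exact ⟨hdisj hcA haA (fun h => hac h.symm),
              (hdisj hbA haA (fun h => hab h.symm)).mono_left hXb⟩
        have hcXnotinQ' : (c ∪ X) ∉ Q' := by
          intro h
          have hle : (c ∪ X) ≤ A'.sup id := by
            rw [← hQ'sup]; exact Finset.le_sup (f := id) h
          have : c ∪ X = ⊥ := disjoint_self.mp (hdisjcX.mono_right hle)
          exact hcXne this
        refine ⟨insert (c ∪ X) Q', ?_, ?_, ?_, ?_, ?_⟩
        · rw [Finset.mem_insert]
          rintro (h | h)
          · exact hcXne h.symm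
          · exact hQ'ne h
        · rw [Finset.coe_insert]
          refine hQ'disj.insert (fun j hj _ => ?_)
          have hle : j ≤ A'.sup id := by
            rw [← hQ'sup]; exact Finset.le_sup (f := id) hj
          exact hdisjcX.mono_right hle
        · rw [Finset.sup_insert, hQ'sup]
          have hA'sup : A'.sup id = (b \ X) ∪ rest.sup id := by
            rw [hA'def, Finset.sup_insert]; rfl
          have hAsup : A.sup id = c ∪ (b ∪ rest.sup id) := by
            conv_lhs => rw [← Finset.insert_erase hcA, ← Finset.insert_erase hbec]
            rw [Finset.sup_insert, Finset.sup_insert]; rfl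
          rw [hA'sup, hAsup]
          show (c ∪ X) ∪ ((b \ X) ∪ rest.sup id) = c ∪ (b ∪ rest.sup id)
          ext x
          have hx : x ∈ X → x ∈ b := fun hx => hXb hx
          simp only [Finset.mem_union, Finset.mem_sdiff]
          tauto
        · intro q hq
          rw [Finset.mem_insert] at hq
          rcases hq with rfl | hq
          · omega
          · exact hQ'K q hq
        · rw [Finset.sum_insert hcXnotinQ']
          have h1 : bw V c ≤ bw V (c ∪ X) := bw_mono V hV Finset.subset_union_left
          have h2 : bw V X ≤ bw V (c ∪ X) := bw_mono V hV Finset.subset_union_right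
          have h3 : bw V b ≤ bw V X + bw V (b \ X) := by
            have hXbX : X ∪ (b \ X) = b := Finset.union_sdiff_of_subset hXb
            calc bw V b = bw V (X ∪ (b \ X)) := by rw [hXbX]
              _ ≤ bw V X + bw V (b \ X) := bw_union_le V hV Finset.disjoint_sdiff
          linarith
      · -- host: output b ∪ c directly, recurse on rest
        push_neg at hserve
        set A' : Finset (Finset (Fin m)) := rest with hA'def
        have hAc' : A'.card + 2 = A.card := by omega
        have hKA : K * A.card = K * A'.card + 2 * K := by
          rw [← hAc']; ring
        have hA'ne0 : (∅ : Finset (Fin m)) ∉ A' := fun h => hAne0 (hmem_rest _ h).1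
        have hA'disj : (A' : Set (Finset (Fin m))).PairwiseDisjoint id :=
          hdisj.subset (fun x hx => (hmem_rest x hx).1)
        have hA'count : K * A'.card ≤ ∑ a ∈ A', a.card := by omega
        obtain ⟨Q', hQ'ne, hQ'disj, hQ'sup, hQ'K, hQ'w⟩ :=
          IH A' (by omega) hA'ne0 hA'disj hA'count
        have hbcd : Disjoint b c := hcb.symm
        have hbccard : (b ∪ c).card = b.card + c.card :=
          Finset.card_union_of_disjoint hbcd
        have hbcne : b ∪ c ≠ ∅ := by
          intro h
          rw [h] at hbccard; simp at hbccard; omega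
        have hdisjbc : Disjoint (b ∪ c) (A'.sup id) := by
          rw [Finset.disjoint_sup_right]
          intro a ha
          obtain ⟨haA, hab, hac⟩ := hmem_rest a ha
          rw [Finset.disjoint_union_left]
          exact ⟨hdisj hbA haA (fun h => hab h.symm),
            hdisj hcA haA (fun h => hac h.symm)⟩
        have hbcnotinQ' : (b ∪ c) ∉ Q' := by
          intro h
          have hle : (b ∪ c) ≤ A'.sup id := by
            rw [← hQ'sup]; exact Finset.le_sup (f := id) h
          have : b ∪ c = ⊥ := disjoint_self.mp (hdisjbc.mono_right hle)
          exact hbcne this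
        refine ⟨insert (b ∪ c) Q', ?_, ?_, ?_, ?_, ?_⟩
        · rw [Finset.mem_insert]
          rintro (h | h)
          · exact hbcne h.symm
          · exact hQ'ne h
        · rw [Finset.coe_insert]
          refine hQ'disj.insert (fun j hj _ => ?_)
          have hle : j ≤ A'.sup id := by
            rw [← hQ'sup]; exact Finset.le_sup (f := id) hj
          exact hdisjbc.mono_right hle
        · rw [Finset.sup_insert, hQ'sup]
          have hAsup : A.sup id = c ∪ (b ∪ A'.sup id) := by
            conv_lhs => rw [← Finset.insert_erase hcA, ← Finset.insert_erase hbec]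
            rw [Finset.sup_insert, Finset.sup_insert]; rfl
          rw [hAsup]
          show (b ∪ c) ∪ A'.sup id = c ∪ (b ∪ A'.sup id)
          ext x
          simp only [Finset.mem_union]
          tauto
        · intro q hq
          rw [Finset.mem_insert] at hq
          rcases hq with rfl | hq
          · omega
          · exact hQ'K q hq
        · rw [Finset.sum_insert hbcnotinQ']
          have h1 : bw V c ≤ bw V (b ∪ c) := bw_mono V hV Finset.subset_union_right
          have h2 : bw V b ≤ bw V (b ∪ c) := bw_mono V hV Finset.subset_union_left
          linarith

/-- For nonnegative valuations and `1 ≤ K ≤ m`, every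
partition of the `m` items into at most `⌊m/K⌋` nonempty bundles with
welfare `W` can be converted into a `K`-anonymous scheme with welfare at
least `W / 2`. -/
theorem stmt5 (n m K : ℕ) (hK : 1 ≤ K) (hKm : K ≤ m)
    (V : Fin n → Fin m → ℝ) (hV : ∀ i j, 0 ≤ V i j)
    (P : Finpartition (univ : Finset (Fin m))) (hP : P.parts.card ≤ m / K) :
    ∃ Q : Finpartition (univ : Finset (Fin m)),
      KAnonymous K Q ∧ welfare V P / 2 ≤ welfare V Q := by
  have hsum : ∑ a ∈ P.parts, a.card = m := by simpa using P.sum_card_parts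
  have hcount : K * P.parts.card ≤ ∑ a ∈ P.parts, a.card := by
    rw [hsum]
    calc K * P.parts.card ≤ K * (m / K) := Nat.mul_le_mul_left K hP
      _ ≤ m := by rw [mul_comm]; exact Nat.div_mul_le_self m K
  obtain ⟨Qf, hQne, hQdisj, hQsup, hQK, hQw⟩ :=
    repack V hV K hK P.parts.card P.parts le_rfl
      (by simpa using P.bot_notMem)
      (Finset.supIndep_iff_pairwiseDisjoint.mp P.supIndep) hcount
  refine ⟨⟨Qf, Finset.supIndep_iff_pairwiseDisjoint.mpr hQdisj,
    by rw [hQsup, P.sup_parts], by simpa using hQne⟩, hQK, ?_⟩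
  have h1 : welfare V P = ∑ a ∈ P.parts, bw V a := rfl
  have h2 : welfare V ⟨Qf, Finset.supIndep_iff_pairwiseDisjoint.mpr hQdisj,
      by rw [hQsup, P.sup_parts], by simpa using hQne⟩ = ∑ q ∈ Qf, bw V q := rfl
  rw [h1, h2]
  linarith
end

section
/- Suppose the valuations have the product-plus-offset form V_{ij} = p_i·q_j + b_i for reals p_i, q_j, b_i, and let 1 ≤ K ≤ m. Among all assignments f from the m items to the n bidders in which every nonempty fiber f⁻¹(i) contains at least K items, there exists one maximizing the total welfare ∑_{j=1}^{m} (p_{f(j)}·q_j + b_{f(j)}) that is additionally monotone: for any two items j, j′, if p_{f(j)} < p_{f(j′)} then q_j ≤ q_{j′} (i.e., winners with larger p receive items with larger q). -/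
open Finset

/-- A `K`-anonymous assignment of the `m` items to the `n` bidders: every
bidder receives either no items or at least `K` items. -/
def KAnonAssign {n m : ℕ} (K : ℕ) (f : Fin m → Fin n) : Prop :=
  ∀ i : Fin n,
    (univ.filter fun j => f j = i).card = 0 ∨
    K ≤ (univ.filter fun j => f j = i).card

/-- The welfare of an assignment, for valuations of the product-plus-offset
form `V i j = p i * q j + b i`. -/
def assignWelfare {n m : ℕ} (p b : Fin n → ℝ) (q : Fin m → ℝ)
    (f : Fin m → Fin n) : ℝ :=
  ∑ j, (p (f j) * q j + b (f j))

/-- For valuations `V i j = p i * q j + b i` and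
`1 ≤ K ≤ m`, among all `K`-anonymous assignments there is one maximizing
the welfare that is moreover monotone: whenever `p (f j) < p (f j')` we have
`q j ≤ q j'` (winners with larger `p` receive items with larger `q`). -/
theorem stmt6 (n m K : ℕ) (hn : 0 < n) (hK : 1 ≤ K) (hKm : K ≤ m)
    (p b : Fin n → ℝ) (q : Fin m → ℝ) :
    ∃ f : Fin m → Fin n, KAnonAssign K f ∧
      (∀ g : Fin m → Fin n, KAnonAssign K g →
        assignWelfare p b q g ≤ assignWelfare p b q f) ∧
      (∀ j j' : Fin m, p (f j) < p (f j') → q j ≤ q j') := by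
  classical
  have i0 : Fin n := ⟨0, hn⟩
  have hne : (univ.filter fun f : Fin m → Fin n => KAnonAssign K f).Nonempty := by
    refine ⟨fun _ => i0, ?_⟩
    simp only [mem_filter, mem_univ, true_and]
    intro i
    by_cases h : i = i0
    · right
      have : (univ.filter fun _ : Fin m => (i0 : Fin n) = i) = univ := by
        simp [h]
      rw [this, card_univ, Fintype.card_fin]; exact hKm
    · left
      have : (univ.filter fun _ : Fin m => (i0 : Fin n) = i) = ∅ := by
        simp [Ne.symm h]
      rw [this, card_empty]
  obtain ⟨f, hfmem, hmax⟩ :=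
    Finset.exists_max_image (univ.filter fun f : Fin m → Fin n => KAnonAssign K f)
      (assignWelfare p b q) hne
  simp only [mem_filter, mem_univ, true_and] at hfmem
  refine ⟨f, hfmem, ?_, ?_⟩
  · intro g hg
    exact hmax g (by simp [hg])
  · intro j j' hp
    by_contra hq
    push_neg at hq
    have hjj' : j ≠ j' := by
      rintro rfl; exact lt_irrefl _ hp
    set g : Fin m → Fin n := fun k => f (Equiv.swap j j' k) with hgdef
    have hgK : KAnonAssign K g := by
      intro i
      have hcard : (univ.filter fun k => g k = i).card
          = (univ.filter fun k => f k = i).card := by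
        apply Finset.card_bij (fun k _ => Equiv.swap j j' k)
        · intro k hk
          simp only [mem_filter, mem_univ, true_and] at hk ⊢
          exact hk
        · intro a _ b _ hab
          exact (Equiv.swap j j').injective hab
        · intro k hk
          simp only [mem_filter, mem_univ, true_and] at hk
          exact ⟨Equiv.swap j j' k, by
            simp only [mem_filter, mem_univ, true_and, hgdef, Equiv.swap_apply_self]
            exact hk, by simp⟩
      rw [hcard]; exact hfmem i
    have hmem : g ∈ (univ.filter fun f : Fin m → Fin n => KAnonAssign K f) := by
      simp [hgK]
    have hle := hmax g hmem
    -- compute welfare difference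
    have hdiff : assignWelfare p b q g - assignWelfare p b q f
        = (p (f j') - p (f j)) * (q j - q j') := by
      unfold assignWelfare
      rw [← Finset.sum_sub_distrib]
      have hsub : ∀ k ∈ (univ : Finset (Fin m)) \ {j, j'},
          (p (g k) * q k + b (g k)) - (p (f k) * q k + b (f k)) = 0 := by
        intro k hk
        simp only [mem_sdiff, mem_univ, mem_insert, mem_singleton, true_and] at hk
        push_neg at hk
        have : g k = f k := by
          simp [hgdef, Equiv.swap_apply_of_ne_of_ne hk.1 hk.2]
        rw [this]; ring
      rw [← Finset.sum_subset (Finset.subset_univ ({j, j'} : Finset (Fin m)))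
        (fun k _ hk => by
          apply hsub
          simp only [mem_sdiff, mem_univ, true_and]
          exact hk)]
      rw [Finset.sum_pair hjj']
      have h1 : g j = f j' := by simp [hgdef]
      have h2 : g j' = f j := by simp [hgdef]
      rw [h1, h2]; ring
    have hpos : 0 < (p (f j') - p (f j)) * (q j - q j') :=
      mul_pos (by linarith) (by linarith)
    linarith
end

section
/- Let K ≥ 2 and let x_1, …, x_{2K−2} be nonnegative integers with even sum W. Consider the instance with 3 bidders and 2K items e_1, e_2, f_1, …, f_{2K−2}, where bidder 1 values e_1 at W/2, bidder 2 values e_2 at W/2, bidder 3 values f_i at x_i for each i, and all other valuations are 0. Then there exists a K-anonymous scheme with revenue at least W if and only if there exists a subset T ⊆ {1, …, 2K−2} with |T| = K − 1 and ∑_{i∈T} x_i = W/2. (Moreover W is always an upper bound on the revenue of any scheme of this instance, so the optimal K-anonymous revenue equals W exactly when such a subset exists.) -/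
open Finset

/-- The second-highest of the values `w 0, …, w (n-1)` (for `n ≥ 2`):
the minimum over `i` of the maximum of the values with index `≠ i`. -/
noncomputable def secondPrice {n : ℕ} (w : Fin n → ℝ) : ℝ :=
  ⨅ i, ⨆ k : {k : Fin n // k ≠ i}, w (k : Fin n)

/-- The revenue of a bundling scheme `P`: the sum over bundles of the
second-highest value, among the bidders, for the bundle. -/
noncomputable def revenue {n m : ℕ} (V : Fin n → Fin m → ℝ)
    (P : Finpartition (univ : Finset (Fin m))) : ℝ :=
  ∑ b ∈ P.parts, secondPrice fun i => ∑ j ∈ b, V i j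

/-- The hardness-reduction instance: `3` bidders and `2K` items
`e₁, e₂, f₁, …, f_{2K-2}` (item `0` is `e₁`, item `1` is `e₂`, item `j ≥ 2`
is `f_{j-1}`).  Bidder `0` values `e₁` at `W/2`, bidder `1` values `e₂` at
`W/2`, bidder `2` values `f_i` at `x i`, all other values are `0`. -/
noncomputable def hardV (K : ℕ) (x : Fin (2 * K - 2) → ℕ) (W : ℕ) :
    Fin 3 → Fin (2 * K) → ℝ :=
  fun i j =>
    if i = 0 then (if (j : ℕ) = 0 then (W : ℝ) / 2 else 0)
    else if i = 1 then (if (j : ℕ) = 1 then (W : ℝ) / 2 else 0)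
    else if h : 2 ≤ (j : ℕ) then
      (x ⟨(j : ℕ) - 2, by have := j.isLt; omega⟩ : ℝ)
    else 0

/-!
Leaving bidder 3 out, the second price of a bundle is at most the value of `e₁` and `e₂` in it,
and these bounds add up to `W` over any scheme. A scheme with revenue `W` is therefore tight in
every bundle. For `W > 0` this separates `e₁` from `e₂`, and the bundles of `e₁` and `e₂` each sell
for `W/2`, so each is worth at least `W/2` to bidder 3, whose total value is `W`: the `f_i` in the
bundle of `e₁` are worth exactly `W/2`, and by `K`-anonymity on `2K` items that bundle has exactly
`K` items. Conversely `{e₁} ∪ {f_i | i ∈ T}` and its complement form a `K`-anonymous scheme of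
revenue `W`.
-/

section SecondPrice

variable {n : ℕ} {w : Fin n → ℝ} {c : ℝ}

lemma secondPrice_le (i : Fin n) (h : ∀ k, k ≠ i → w k ≤ c) (hc : 0 ≤ c) :
    secondPrice w ≤ c :=
  (ciInf_le (Finite.bddBelow_range _) i).trans (Real.iSup_le (fun k => h k k.2) hc)

lemma le_secondPrice {j j' : Fin n} (hjj' : j ≠ j') (hj : c ≤ w j) (hj' : c ≤ w j') :
    c ≤ secondPrice w := by
  have : Nonempty (Fin n) := ⟨j⟩
  refine le_ciInf fun i => ?_
  obtain ⟨k, hki, hk⟩ : ∃ k, k ≠ i ∧ c ≤ w k := by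
    rcases eq_or_ne j i with rfl | hji
    · exact ⟨j', hjj'.symm, hj'⟩
    · exact ⟨j, hji, hj⟩
  exact hk.trans (le_ciSup (f := fun k : {k // k ≠ i} => w k) (Finite.bddAbove_range _) ⟨k, hki⟩)

end SecondPrice

lemma Finpartition.sum_sum_parts {α M : Type*} [DecidableEq α] [AddCommMonoid M] {s : Finset α}
    (P : Finpartition s) (g : α → M) : ∑ b ∈ P.parts, ∑ j ∈ b, g j = ∑ j ∈ s, g j := by
  conv_rhs => rw [← P.biUnion_parts]
  exact (sum_biUnion P.supIndep.pairwiseDisjoint).symm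

lemma Finpartition.sum_ite_mem_parts {α M : Type*} [DecidableEq α] [AddCommMonoid M]
    {s : Finset α} (P : Finpartition s) (a : α) (c : M) :
    ∑ b ∈ P.parts, (if a ∈ b then c else 0) = if a ∈ s then c else 0 := by
  simp_rw [← sum_ite_eq' _ a fun _ => c, P.sum_sum_parts]

noncomputable def bundlePrice {n m : ℕ} (V : Fin n → Fin m → ℝ) (b : Finset (Fin m)) : ℝ :=
  secondPrice fun i => ∑ j ∈ b, V i j

lemma revenue_eq_sum_bundlePrice {n m : ℕ} (V : Fin n → Fin m → ℝ)
    (P : Finpartition (univ : Finset (Fin m))) :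
    revenue V P = ∑ b ∈ P.parts, bundlePrice V b :=
  rfl

section HardInstance

variable {K : ℕ}

def itemE₁ [NeZero K] : Fin (2 * K) := ⟨0, by have := NeZero.pos K; omega⟩

def itemE₂ [NeZero K] : Fin (2 * K) := ⟨1, by have := NeZero.pos K; omega⟩

def itemF : Fin (2 * K - 2) ↪ Fin (2 * K) :=
  ⟨fun i => ⟨i + 2, by have := i.isLt; omega⟩, fun a b h => by simpa [Fin.ext_iff] using h⟩

noncomputable def fIndices (b : Finset (Fin (2 * K))) : Finset (Fin (2 * K - 2)) :=
  b.preimage itemF itemF.injective.injOn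

@[simp]
lemma val_itemF (i : Fin (2 * K - 2)) : (itemF i : ℕ) = i + 2 :=
  rfl

@[simp]
lemma mem_fIndices {b : Finset (Fin (2 * K))} {i : Fin (2 * K - 2)} :
    i ∈ fIndices b ↔ itemF i ∈ b :=
  mem_preimage

lemma fIndices_univ : fIndices (univ : Finset (Fin (2 * K))) = univ :=
  preimage_univ _

lemma fIndices_compl (b : Finset (Fin (2 * K))) : fIndices bᶜ = (fIndices b)ᶜ :=
  preimage_compl b itemF.injective

variable [NeZero K]

lemma itemE₂_ne_itemE₁ : (itemE₂ : Fin (2 * K)) ≠ itemE₁ := by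
  simp [itemE₁, itemE₂, Fin.ext_iff]

lemma itemF_ne_itemE₁ (i : Fin (2 * K - 2)) : itemF i ≠ itemE₁ := by
  simp [itemE₁, Fin.ext_iff]

lemma itemF_ne_itemE₂ (i : Fin (2 * K - 2)) : itemF i ≠ itemE₂ := by
  simp [itemE₂, Fin.ext_iff]

lemma item_cases (j : Fin (2 * K)) : j = itemE₁ ∨ j = itemE₂ ∨ ∃ i, itemF i = j := by
  obtain ⟨_ | _ | j, hj⟩ := j
  · exact Or.inl rfl
  · exact Or.inr (Or.inl rfl)
  · exact Or.inr (Or.inr ⟨⟨j, by omega⟩, rfl⟩)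

lemma fIndices_insert_itemE₁_map (T : Finset (Fin (2 * K - 2))) :
    fIndices (insert itemE₁ (T.map itemF)) = T := by
  ext i
  simp [itemF_ne_itemE₁]

lemma card_insert_itemE₁_map (T : Finset (Fin (2 * K - 2))) :
    (insert itemE₁ (T.map itemF)).card = T.card + 1 := by
  rw [card_insert_of_notMem, card_map]
  simpa using fun i _ => itemF_ne_itemE₁ i

lemma eq_insert_itemE₁_map_fIndices {b : Finset (Fin (2 * K))} (h₁ : itemE₁ ∈ b)
    (h₂ : itemE₂ ∉ b) : b = insert itemE₁ ((fIndices b).map itemF) := by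
  ext j
  rcases item_cases j with rfl | rfl | ⟨i, rfl⟩
  · simp [h₁]
  · simp [h₂, itemE₂_ne_itemE₁, itemF_ne_itemE₂]
  · simp [itemF_ne_itemE₁]

end HardInstance

section HardValuation

variable {K : ℕ} (x : Fin (2 * K - 2) → ℕ) (W : ℕ)

lemma hardV_two_itemF (i : Fin (2 * K - 2)) : hardV K x W 2 (itemF i) = x i := by
  simp [hardV]

lemma hardV_nonneg (i : Fin 3) (j : Fin (2 * K)) : 0 ≤ hardV K x W i j := by
  unfold hardV
  split_ifs <;> positivity

variable [NeZero K]

lemma hardV_zero (j : Fin (2 * K)) :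
    hardV K x W 0 j = if j = itemE₁ then (W : ℝ) / 2 else 0 := by
  simp only [hardV, itemE₁, Fin.ext_iff, ↓reduceIte]

lemma hardV_one (j : Fin (2 * K)) :
    hardV K x W 1 j = if j = itemE₂ then (W : ℝ) / 2 else 0 := by
  simp only [hardV, itemE₂, Fin.ext_iff, Fin.isValue, one_ne_zero,
    ↓reduceIte]

lemma hardV_two_itemE₁ : hardV K x W 2 itemE₁ = 0 := by
  simp [hardV, itemE₁]

lemma hardV_two_itemE₂ : hardV K x W 2 itemE₂ = 0 := by
  simp [hardV, itemE₂]

lemma sum_hardV_zero (b : Finset (Fin (2 * K))) :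
    ∑ j ∈ b, hardV K x W 0 j = if itemE₁ ∈ b then (W : ℝ) / 2 else 0 := by
  simp_rw [hardV_zero, sum_ite_eq']

lemma sum_hardV_one (b : Finset (Fin (2 * K))) :
    ∑ j ∈ b, hardV K x W 1 j = if itemE₂ ∈ b then (W : ℝ) / 2 else 0 := by
  simp_rw [hardV_one, sum_ite_eq']

lemma sum_hardV_two (b : Finset (Fin (2 * K))) :
    ∑ j ∈ b, hardV K x W 2 j = ∑ i ∈ fIndices b, (x i : ℝ) := by
  have hsub : (fIndices b).map itemF ⊆ b := map_subset_iff_subset_preimage.2 subset_rfl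
  rw [← sum_subset hsub, sum_map]
  · exact sum_congr rfl fun i _ => hardV_two_itemF x W i
  · intro j _ hj
    rcases item_cases j with rfl | rfl | ⟨i, rfl⟩
    · exact hardV_two_itemE₁ x W
    · exact hardV_two_itemE₂ x W
    · simp_all

lemma sum_hardV_two_univ (hW : ∑ i, x i = W) : ∑ j, hardV K x W 2 j = W := by
  rw [sum_hardV_two, fIndices_univ, ← hW, Nat.cast_sum]

end HardValuation

section HardRevenue

variable {K : ℕ} [NeZero K] {x : Fin (2 * K - 2) → ℕ} {W : ℕ}

lemma bundlePrice_hardV_le_half (b : Finset (Fin (2 * K))) :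
    bundlePrice (hardV K x W) b ≤ W / 2 := by
  have hW₀ : (0 : ℝ) ≤ W / 2 := by positivity
  refine secondPrice_le 2 (fun k hk => ?_) hW₀
  obtain rfl | rfl : k = 0 ∨ k = 1 := by revert k; decide
  · rw [sum_hardV_zero]; split_ifs <;> simp [hW₀]
  · rw [sum_hardV_one]; split_ifs <;> simp [hW₀]

lemma bundlePrice_hardV_le (b : Finset (Fin (2 * K))) :
    bundlePrice (hardV K x W) b ≤
      (if itemE₁ ∈ b then (W : ℝ) / 2 else 0) + (if itemE₂ ∈ b then (W : ℝ) / 2 else 0) := by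
  rw [← sum_hardV_zero x W, ← sum_hardV_one x W]
  have h₀ := sum_nonneg fun j (_ : j ∈ b) => hardV_nonneg x W 0 j
  have h₁ := sum_nonneg fun j (_ : j ∈ b) => hardV_nonneg x W 1 j
  refine secondPrice_le 2 (fun k hk => ?_) (add_nonneg h₀ h₁)
  obtain rfl | rfl : k = 0 ∨ k = 1 := by revert k; decide
  · exact le_add_of_nonneg_right h₁
  · exact le_add_of_nonneg_left h₀

lemma bundlePrice_hardV_le_sum_two {b : Finset (Fin (2 * K))} (h : ¬(itemE₁ ∈ b ∧ itemE₂ ∈ b)) :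
    bundlePrice (hardV K x W) b ≤ ∑ j ∈ b, hardV K x W 2 j := by
  have h₂ := sum_nonneg fun j (_ : j ∈ b) => hardV_nonneg x W 2 j
  rcases not_and_or.1 h with h₁ | h₁
  · refine secondPrice_le 1 (fun k hk => ?_) h₂
    obtain rfl | rfl : k = 0 ∨ k = 2 := by revert k; decide
    · rwa [sum_hardV_zero, if_neg h₁]
    · exact le_rfl
  · refine secondPrice_le 0 (fun k hk => ?_) h₂
    obtain rfl | rfl : k = 1 ∨ k = 2 := by revert k; decide
    · rwa [sum_hardV_one, if_neg h₁]
    · exact le_rfl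

variable (P : Finpartition (univ : Finset (Fin (2 * K))))

lemma sum_parts_ite_itemE₁_add_ite_itemE₂ :
    ∑ b ∈ P.parts,
      ((if itemE₁ ∈ b then (W : ℝ) / 2 else 0) + (if itemE₂ ∈ b then (W : ℝ) / 2 else 0)) = W := by
  rw [sum_add_distrib, P.sum_ite_mem_parts, P.sum_ite_mem_parts, if_pos (mem_univ _),
    if_pos (mem_univ _), add_halves]

lemma revenue_hardV_le : revenue (hardV K x W) P ≤ W := by
  rw [revenue_eq_sum_bundlePrice, ← sum_parts_ite_itemE₁_add_ite_itemE₂ P]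
  exact sum_le_sum fun b _ => bundlePrice_hardV_le b

variable {P}

lemma bundlePrice_hardV_eq_of_le_revenue (h : (W : ℝ) ≤ revenue (hardV K x W) P)
    {b : Finset (Fin (2 * K))} (hb : b ∈ P.parts) :
    bundlePrice (hardV K x W) b =
      (if itemE₁ ∈ b then (W : ℝ) / 2 else 0) + (if itemE₂ ∈ b then (W : ℝ) / 2 else 0) := by
  refine (sum_eq_sum_iff_of_le fun b _ => bundlePrice_hardV_le b).1 ?_ b hb
  exact (sum_le_sum fun b _ => bundlePrice_hardV_le b).antisymm
    ((sum_parts_ite_itemE₁_add_ite_itemE₂ P).trans_le h)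

lemma not_itemE₁_mem_and_itemE₂_mem (hW : 0 < W) (h : (W : ℝ) ≤ revenue (hardV K x W) P)
    {b : Finset (Fin (2 * K))} (hb : b ∈ P.parts) : ¬(itemE₁ ∈ b ∧ itemE₂ ∈ b) := by
  rintro ⟨h₁, h₂⟩
  have hprice := bundlePrice_hardV_eq_of_le_revenue h hb
  rw [if_pos h₁, if_pos h₂, add_halves] at hprice
  have : (0 : ℝ) < W := Nat.cast_pos.2 hW
  linarith [bundlePrice_hardV_le_half (x := x) (W := W) b]

lemma half_le_sum_hardV_two (hW : 0 < W) (h : (W : ℝ) ≤ revenue (hardV K x W) P)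
    {b : Finset (Fin (2 * K))} (hb : b ∈ P.parts) (hmem : itemE₁ ∈ b ∨ itemE₂ ∈ b) :
    (W : ℝ) / 2 ≤ ∑ j ∈ b, hardV K x W 2 j := by
  have hsep := not_itemE₁_mem_and_itemE₂_mem hW h hb
  have hprice : bundlePrice (hardV K x W) b = W / 2 := by
    rw [bundlePrice_hardV_eq_of_le_revenue h hb]
    rcases hmem with h₁ | h₂
    · rw [if_pos h₁, if_neg fun h₂ => hsep ⟨h₁, h₂⟩, add_zero]
    · rw [if_pos h₂, if_neg fun h₁ => hsep ⟨h₁, h₂⟩, zero_add]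
  exact hprice ▸ bundlePrice_hardV_le_sum_two hsep

end HardRevenue

section Reduction

variable {K : ℕ} [NeZero K] {x : Fin (2 * K - 2) → ℕ} {W : ℕ}

lemma exists_card_sum_eq_of_le_revenue (hW : ∑ i, x i = W) (hW₀ : 0 < W)
    {P : Finpartition (univ : Finset (Fin (2 * K)))} (hP : KAnonymous K P)
    (h : (W : ℝ) ≤ revenue (hardV K x W) P) :
    ∃ T : Finset (Fin (2 * K - 2)), T.card = K - 1 ∧ 2 * ∑ i ∈ T, x i = W := by
  obtain ⟨b₀, hb₀, h₀⟩ := P.exists_mem (mem_univ itemE₁)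
  obtain ⟨b₁, hb₁, h₁⟩ := P.exists_mem (mem_univ itemE₂)
  have h₀₂ : itemE₂ ∉ b₀ := fun h₂ => not_itemE₁_mem_and_itemE₂_mem hW₀ h hb₀ ⟨h₀, h₂⟩
  have hdisj : Disjoint b₀ b₁ := P.disjoint hb₀ hb₁ (by rintro rfl; exact h₀₂ h₁)
  have hcard : b₀.card = K := by
    have := card_le_univ (b₀ ∪ b₁)
    rw [card_union_of_disjoint hdisj, Fintype.card_fin] at this
    linarith [hP b₀ hb₀, hP b₁ hb₁]
  have hv₀ := half_le_sum_hardV_two hW₀ h hb₀ (Or.inl h₀)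
  have hv₁ := half_le_sum_hardV_two hW₀ h hb₁ (Or.inr h₁)
  have htot : ∑ j ∈ b₀ ∪ b₁, hardV K x W 2 j ≤ W :=
    sum_hardV_two_univ x W hW ▸
      sum_le_sum_of_subset_of_nonneg (subset_univ _) fun j _ _ => hardV_nonneg x W 2 j
  rw [sum_union hdisj] at htot
  refine ⟨fIndices b₀, ?_, ?_⟩
  · have := card_insert_itemE₁_map (fIndices b₀)
    rw [← eq_insert_itemE₁_map_fIndices h₀ h₀₂] at this
    omega
  · have : (2 * ∑ i ∈ fIndices b₀, x i : ℝ) = W := by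
      push_cast
      rw [← sum_hardV_two]
      linarith
    exact_mod_cast this

lemma exists_kAnonymous_le_revenue (hW : ∑ i, x i = W) {T : Finset (Fin (2 * K - 2))}
    (hT : T.card = K - 1) (hTW : 2 * ∑ i ∈ T, x i = W) :
    ∃ P : Finpartition (univ : Finset (Fin (2 * K))),
      KAnonymous K P ∧ (W : ℝ) ≤ revenue (hardV K x W) P := by
  set B := insert itemE₁ (T.map itemF)
  have hB₁ : itemE₁ ∈ B := mem_insert_self _ _
  have hB₂ : itemE₂ ∈ Bᶜ := by
    simpa [B, itemE₂_ne_itemE₁] using fun i _ => itemF_ne_itemE₂ i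
  have hcard : B.card = K := by
    rw [card_insert_itemE₁_map, hT]
    have := NeZero.pos K
    omega
  have hcardc : Bᶜ.card = K := by
    rw [card_compl, hcard, Fintype.card_fin]
    omega
  have hT₁ : (∑ i ∈ T, x i : ℝ) = W / 2 := by
    rw [← hTW]
    push_cast
    ring
  have hT₂ : (∑ i ∈ Tᶜ, x i : ℝ) = W / 2 := by
    have : (∑ i ∈ T, x i : ℝ) + ∑ i ∈ Tᶜ, (x i : ℝ) = W := by
      rw [sum_add_sum_compl, ← hW, Nat.cast_sum]
    linarith
  have hpB : (W : ℝ) / 2 ≤ bundlePrice (hardV K x W) B := by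
    refine le_secondPrice (j := 0) (j' := 2) (by decide) ?_ ?_
    · rw [sum_hardV_zero, if_pos hB₁]
    · rw [sum_hardV_two, fIndices_insert_itemE₁_map, hT₁]
  have hpBc : (W : ℝ) / 2 ≤ bundlePrice (hardV K x W) Bᶜ := by
    refine le_secondPrice (j := 1) (j' := 2) (by decide) ?_ ?_
    · rw [sum_hardV_one, if_pos hB₂]
    · rw [sum_hardV_two, fIndices_compl, fIndices_insert_itemE₁_map, hT₂]
  let P : Finpartition (univ : Finset (Fin (2 * K))) :=
    (Finpartition.indiscrete (ne_empty_of_mem hB₁)).extend (ne_empty_of_mem hB₂)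
      disjoint_compl_right (union_compl B)
  have hparts : P.parts = {Bᶜ, B} := rfl
  refine ⟨P, fun b hb => ?_, ?_⟩
  · rw [hparts, mem_insert, mem_singleton] at hb
    rcases hb with rfl | rfl <;> omega
  · rw [revenue_eq_sum_bundlePrice, hparts, sum_pair compl_ne_self]
    linarith

end Reduction

theorem stmt7_general (K : ℕ) (hK : 2 ≤ K) (x : Fin (2 * K - 2) → ℕ) (W : ℕ)
    (hW : ∑ i, x i = W) :
    (∀ P : Finpartition (univ : Finset (Fin (2 * K))),
      revenue (hardV K x W) P ≤ (W : ℝ)) ∧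
    ((∃ P : Finpartition (univ : Finset (Fin (2 * K))),
        KAnonymous K P ∧ (W : ℝ) ≤ revenue (hardV K x W) P) ↔
     (∃ T : Finset (Fin (2 * K - 2)), T.card = K - 1 ∧ 2 * ∑ i ∈ T, x i = W)) := by
  have : NeZero K := ⟨by omega⟩
  refine ⟨revenue_hardV_le, ?_, fun ⟨T, hT, hTW⟩ => exists_kAnonymous_le_revenue hW hT hTW⟩
  rintro ⟨P, hP, h⟩
  rcases Nat.eq_zero_or_pos W with rfl | hW₀
  · obtain ⟨T, -, hT⟩ := exists_subset_card_eq (s := (univ : Finset (Fin (2 * K - 2))))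
      (n := K - 1) (by rw [card_univ, Fintype.card_fin]; omega)
    refine ⟨T, hT, ?_⟩
    have := hW ▸ sum_le_sum_of_subset (f := x) (subset_univ T)
    omega
  · exact exists_card_sum_eq_of_le_revenue hW hW₀ hP h

/-- Let `K ≥ 2` and let `x 1, …, x (2K-2)` be nonnegative
integers with even sum `W`; consider the instance `hardV K x W`.  Then `W`
is an upper bound on the revenue of every scheme, and there is a
`K`-anonymous scheme with revenue at least `W` if and only if there is a set
`T` of `K - 1` of the indices with `∑ i ∈ T, x i = W / 2`. -/
theorem stmt7 (K : ℕ) (hK : 2 ≤ K) (x : Fin (2 * K - 2) → ℕ) (W : ℕ)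
    (hW : ∑ i, x i = W) (hEven : Even W) :
    (∀ P : Finpartition (univ : Finset (Fin (2 * K))),
      revenue (hardV K x W) P ≤ (W : ℝ)) ∧
    ((∃ P : Finpartition (univ : Finset (Fin (2 * K))),
        KAnonymous K P ∧ (W : ℝ) ≤ revenue (hardV K x W) P) ↔
     (∃ T : Finset (Fin (2 * K - 2)), T.card = K - 1 ∧ 2 * ∑ i ∈ T, x i = W)) :=
  stmt7_general K hK x W hW
end

section
/- Let an instance have n ≥ 2 bidders and m items with nonnegative valuations V_{ij}, and let P be a K-anonymous scheme with welfare W. For each bundle of P choose a winner attaining the maximum value, and for each bidder i let V_i be the total value of the bundles won by i; let V* = max_i V_i. Then there exists a K-anonymous scheme whose revenue is at least (W − V*)/2. In particular, if V* ≤ β·W for some 0 < β < 1, there is a K-anonymous scheme with revenue at least ((1−β)/2)·W. -/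
open Finset

/-!
Sort the bidders so that their won values are nonincreasing, `V_{σ 0} ≥ V_{σ 1} ≥ ⋯`, and merge,
for each `t`, all bundles won by the bidders of ranks `2t` and `2t+1`. Every new bundle is a union
of old ones, so `K`-anonymity survives, and both bidders of the pair value it at least
`V_{σ (2t+1)}`, which bounds its second price from below. Hence
`W = ∑ₖ V_{σ k} ≤ V_{σ 0} + 2 ∑ₜ V_{σ (2t+1)} ≤ V* + 2 · revenue`.
The sorted values are extended by zero to all of `ℕ`, so that an odd number of bidders needs no
separate case.
-/

namespace Finpartition

variable {α ι : Type*} [Fintype α] [DecidableEq α] [DecidableEq ι]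

def fibers (g : α → ι) : Finpartition (univ : Finset α) :=
  letI : DecidableRel (Setoid.ker g).r := fun a b => inferInstanceAs (Decidable (g a = g b))
  ofSetoid (Setoid.ker g)

lemma fibers_parts (g : α → ι) :
    (fibers g).parts = (univ.image g).image fun t => ({a | g a = t} : Finset α) := by
  rw [image_image]
  refine image_congr fun a _ => ?_
  ext b
  simp [eq_comm]

lemma sum_parts_fibers {M : Type*} [AddCommMonoid M] (g : α → ι) {T : Finset ι}
    (hT : ∀ a, g a ∈ T) {F : Finset α → M} (hF : F ∅ = 0) :
    ∑ q ∈ (fibers g).parts, F q = ∑ t ∈ T, F ({a | g a = t} : Finset α) := by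
  have hinj : Set.InjOn (fun t => ({a | g a = t} : Finset α)) (univ.image g) := by
    intro t ht t' _ htt'
    obtain ⟨a, -, rfl⟩ := mem_image.1 ht
    have : a ∈ ({b | g b = t'} : Finset α) := by simp only at htt'; rw [← htt']; simp
    simpa using this
  rw [fibers_parts, sum_image hinj]
  refine sum_subset (fun t ht => by obtain ⟨a, -, rfl⟩ := mem_image.1 ht; exact hT a) ?_
  intro t _ ht
  rw [filter_eq_empty_iff.2 fun a _ (hat : g a = t) => ht (hat ▸ mem_image_of_mem g (mem_univ a)),
    hF]

end Finpartition

lemma KAnonymous.fibers_comp_part {ι : Type*} [DecidableEq ι] {m K : ℕ}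
    {P : Finpartition (univ : Finset (Fin m))} (hP : KAnonymous K P) (h : Finset (Fin m) → ι) :
    KAnonymous K (Finpartition.fibers fun j => h (P.part j)) := by
  intro q hq
  rw [Finpartition.fibers_parts] at hq
  obtain ⟨_, ht, rfl⟩ := mem_image.1 hq
  obtain ⟨a, -, rfl⟩ := mem_image.1 ht
  have ha : P.part a ∈ P.parts := P.part_mem.2 (mem_univ a)
  refine (hP _ ha).trans (card_le_card fun b hb => ?_)
  simp [P.part_eq_of_mem ha hb]

section SecondPrice

variable {n : ℕ} {w : Fin n → ℝ}

lemma le_secondPrice_s11 {a b : Fin n} (hab : a ≠ b) {x : ℝ} (ha : x ≤ w a) (hb : x ≤ w b) :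
    x ≤ secondPrice w := by
  have : Nonempty (Fin n) := ⟨a⟩
  refine le_ciInf fun i => ?_
  have hbdd : BddAbove (Set.range fun k : {k : Fin n // k ≠ i} => w k) :=
    (Set.finite_range _).bddAbove
  rcases ne_or_eq a i with hai | rfl
  · exact ha.trans (le_ciSup hbdd ⟨a, hai⟩)
  · exact hb.trans (le_ciSup hbdd ⟨b, hab.symm⟩)

lemma secondPrice_nonneg (hw : ∀ k, 0 ≤ w k) : 0 ≤ secondPrice w :=
  Real.iInf_nonneg fun _ => Real.iSup_nonneg fun k => hw k

end SecondPrice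

section Auction

variable {n m : ℕ} (V : Fin n → Fin m → ℝ) (P : Finpartition (univ : Finset (Fin m)))
  (win : Finset (Fin m) → Fin n)

noncomputable def wonValue (i : Fin n) : ℝ :=
  ∑ b ∈ P.parts.filter (fun b => win b = i), ∑ j ∈ b, V i j

variable {V P win}

lemma welfare_eq_sum_wonValue
    (hwin : ∀ b ∈ P.parts, ∑ j ∈ b, V (win b) j = ⨆ i, ∑ j ∈ b, V i j) :
    welfare V P = ∑ i, wonValue V P win i := by
  calc welfare V P = ∑ b ∈ P.parts, ∑ j ∈ b, V (win b) j := (sum_congr rfl hwin).symm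
    _ = ∑ i, ∑ b ∈ P.parts.filter (fun b => win b = i), ∑ j ∈ b, V (win b) j :=
        (sum_fiberwise _ _ _).symm
    _ = ∑ i, wonValue V P win i :=
        sum_congr rfl fun i _ => sum_congr rfl fun b hb => by rw [(mem_filter.1 hb).2]

lemma wonValue_nonneg (hV : ∀ i j, 0 ≤ V i j) (i : Fin n) : 0 ≤ wonValue V P win i :=
  sum_nonneg fun _ _ => sum_nonneg fun j _ => hV i j

lemma wonValue_le_sum_fiber {ι : Type*} [DecidableEq ι] (hV : ∀ i j, 0 ≤ V i j)
    (h : Fin n → ι) (i : Fin n) :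
    wonValue V P win i ≤ ∑ j ∈ ({j | h (win (P.part j)) = h i} : Finset (Fin m)), V i j := by
  refine (sum_biUnion (P.disjoint.subset (coe_subset.2 (filter_subset _ _)))).symm.trans_le
    (sum_le_sum_of_subset_of_nonneg (fun j hj => ?_) fun j _ _ => hV i j)
  obtain ⟨b, hb, hjb⟩ := mem_biUnion.1 hj
  obtain ⟨hbP, rfl⟩ := mem_filter.1 hb
  simp [P.part_eq_of_mem hbP hjb]

lemma revenue_fibers {ι : Type*} [DecidableEq ι] (g : Fin m → ι) {T : Finset ι}
    (hT : ∀ j, g j ∈ T) :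
    revenue V (Finpartition.fibers g) =
      ∑ t ∈ T, secondPrice fun i => ∑ j ∈ ({j | g j = t} : Finset (Fin m)), V i j :=
  Finpartition.sum_parts_fibers g hT (by simp [secondPrice])

end Auction

lemma sum_range_two_mul_add_one_le {c : ℕ → ℝ} (hc : Antitone c) (M : ℕ) :
    ∑ k ∈ range (2 * M + 1), c k ≤ c 0 + 2 * ∑ t ∈ range M, c (2 * t + 1) := by
  induction M with
  | zero => simp
  | succ M ih =>
    rw [show 2 * (M + 1) + 1 = 2 * M + 1 + 1 + 1 by ring, sum_range_succ _ (2 * M + 1 + 1),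
      sum_range_succ _ (2 * M + 1), sum_range_succ _ M]
    have : c (2 * M + 1 + 1) ≤ c (2 * M + 1) := hc (Nat.le_succ _)
    linarith

lemma sum_range_le_add_two_mul_sum_odd {c : ℕ → ℝ} (hc : Antitone c) (hc0 : ∀ k, 0 ≤ c k)
    (N : ℕ) : ∑ k ∈ range N, c k ≤ c 0 + 2 * ∑ t ∈ range N, c (2 * t + 1) :=
  (sum_le_sum_of_subset_of_nonneg (range_subset_range.2 (by omega)) fun k _ _ => hc0 k).trans
    (sum_range_two_mul_add_one_le hc N)

lemma exists_perm_antitone {n : ℕ} {α : Type*} [LinearOrder α] (f : Fin n → α) :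
    ∃ σ : Equiv.Perm (Fin n), Antitone (f ∘ σ) :=
  ⟨Tuple.sort (OrderDual.toDual ∘ f), monotone_toDual_comp_iff.1 (Tuple.monotone_sort _)⟩

section ZeroExtend

variable {n : ℕ} {f : Fin n → ℝ}

def zeroExtend (f : Fin n → ℝ) (k : ℕ) : ℝ := if h : k < n then f ⟨k, h⟩ else 0

lemma zeroExtend_nonneg (hf : ∀ i, 0 ≤ f i) (k : ℕ) : 0 ≤ zeroExtend f k := by
  unfold zeroExtend; split_ifs
  exacts [hf _, le_rfl]

lemma zeroExtend_le_iSup (hf : ∀ i, 0 ≤ f i) (k : ℕ) : zeroExtend f k ≤ ⨆ i, f i := by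
  unfold zeroExtend; split_ifs
  exacts [le_ciSup (Set.finite_range f).bddAbove _, Real.iSup_nonneg hf]

lemma antitone_zeroExtend (hf : Antitone f) (hf0 : ∀ i, 0 ≤ f i) : Antitone (zeroExtend f) := by
  refine antitone_nat_of_succ_le fun k => ?_
  by_cases hk : k + 1 < n
  · simp only [zeroExtend, dif_pos hk, dif_pos (Nat.lt_of_succ_lt hk)]
    exact hf (Fin.mk_le_mk.2 k.le_succ)
  · simpa only [zeroExtend, dif_neg hk] using zeroExtend_nonneg hf0 k

lemma sum_range_zeroExtend (f : Fin n → ℝ) : ∑ k ∈ range n, zeroExtend f k = ∑ i, f i := by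
  rw [← Fin.sum_univ_eq_sum_range]
  exact sum_congr rfl fun i _ => dif_pos i.isLt

end ZeroExtend

section Pairing

variable {n m K : ℕ} {V : Fin n → Fin m → ℝ} {P : Finpartition (univ : Finset (Fin m))}
  {win : Finset (Fin m) → Fin n}

def pairLabel (σ : Equiv.Perm (Fin n)) (i : Fin n) : ℕ := (σ.symm i : ℕ) / 2

lemma pairLabel_lt (σ : Equiv.Perm (Fin n)) (i : Fin n) : pairLabel σ i < n :=
  (Nat.div_le_self _ 2).trans_lt (σ.symm i).isLt

lemma pairLabel_apply (σ : Equiv.Perm (Fin n)) (k : Fin n) : pairLabel σ (σ k) = k / 2 := by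
  rw [pairLabel, Equiv.symm_apply_apply]

lemma zeroExtend_odd_le_secondPrice (hV : ∀ i j, 0 ≤ V i j) {σ : Equiv.Perm (Fin n)}
    (hσ : Antitone (wonValue V P win ∘ σ)) (t : ℕ) :
    zeroExtend (wonValue V P win ∘ σ) (2 * t + 1) ≤ secondPrice fun i =>
      ∑ j ∈ ({j | pairLabel σ (win (P.part j)) = t} : Finset (Fin m)), V i j := by
  by_cases ht : 2 * t + 1 < n
  · set a := σ ⟨2 * t, by omega⟩
    set b := σ ⟨2 * t + 1, ht⟩
    have hab : a ≠ b := σ.injective.ne (by simp [Fin.ext_iff])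
    have hba : wonValue V P win b ≤ wonValue V P win a := hσ (Fin.mk_le_mk.2 (Nat.le_succ _))
    have hfa := wonValue_le_sum_fiber (P := P) (win := win) hV (pairLabel σ) a
    have hfb := wonValue_le_sum_fiber (P := P) (win := win) hV (pairLabel σ) b
    rw [pairLabel_apply, show 2 * t / 2 = t by omega] at hfa
    rw [pairLabel_apply, show (2 * t + 1) / 2 = t by omega] at hfb
    rw [zeroExtend, dif_pos ht]
    exact le_secondPrice_s11 hab (hba.trans hfa) hfb
  · rw [zeroExtend, dif_neg ht]
    exact secondPrice_nonneg fun i => sum_nonneg fun j _ => hV i j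

lemma sum_zeroExtend_odd_le_revenue (hV : ∀ i j, 0 ≤ V i j) {σ : Equiv.Perm (Fin n)}
    (hσ : Antitone (wonValue V P win ∘ σ)) :
    ∑ t ∈ range n, zeroExtend (wonValue V P win ∘ σ) (2 * t + 1) ≤
      revenue V (Finpartition.fibers fun j => pairLabel σ (win (P.part j))) := by
  rw [revenue_fibers _ fun j => mem_range.2 (pairLabel_lt σ (win (P.part j)))]
  exact sum_le_sum fun t _ => zeroExtend_odd_le_secondPrice hV hσ t

theorem exists_kAnonymous_welfare_sub_le_two_mul_revenue (hV : ∀ i j, 0 ≤ V i j)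
    (hP : KAnonymous K P) (hwin : ∀ b ∈ P.parts, ∑ j ∈ b, V (win b) j = ⨆ i, ∑ j ∈ b, V i j) :
    ∃ Q, KAnonymous K Q ∧ welfare V P - ⨆ i, wonValue V P win i ≤ 2 * revenue V Q := by
  obtain ⟨σ, hσ⟩ := exists_perm_antitone (wonValue V P win)
  set f := wonValue V P win ∘ σ
  have hf0 : ∀ i, 0 ≤ f i := fun i => wonValue_nonneg hV _
  refine ⟨_, hP.fibers_comp_part fun b => pairLabel σ (win b), ?_⟩
  have hsup : ⨆ i, f i = ⨆ i, wonValue V P win i := σ.iSup_comp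
  have hW : welfare V P = ∑ k ∈ range n, zeroExtend f k := by
    rw [sum_range_zeroExtend, welfare_eq_sum_wonValue hwin]
    exact (Equiv.sum_comp σ _).symm
  linarith [zeroExtend_le_iSup hf0 0,
    sum_range_le_add_two_mul_sum_odd (antitone_zeroExtend hσ hf0) (zeroExtend_nonneg hf0) n, sum_zeroExtend_odd_le_revenue hV hσ]

end Pairing

theorem stmt11_general (n m K : ℕ)
    (V : Fin n → Fin m → ℝ) (hV : ∀ i j, 0 ≤ V i j)
    (P : Finpartition (univ : Finset (Fin m))) (hP : KAnonymous K P)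
    (win : Finset (Fin m) → Fin n)
    (hwin : ∀ b ∈ P.parts, ∑ j ∈ b, V (win b) j = ⨆ i, ∑ j ∈ b, V i j)
    (Vtot : Fin n → ℝ)
    (hVtot : ∀ i, Vtot i = ∑ b ∈ P.parts.filter (fun b => win b = i), ∑ j ∈ b, V i j)
    (Vstar : ℝ) (hVstar : Vstar = ⨆ i, Vtot i) :
    (∃ Q : Finpartition (univ : Finset (Fin m)),
      KAnonymous K Q ∧ (welfare V P - Vstar) / 2 ≤ revenue V Q) ∧
    (∀ β : ℝ, 0 < β → β < 1 → Vstar ≤ β * welfare V P →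
      ∃ Q : Finpartition (univ : Finset (Fin m)),
        KAnonymous K Q ∧ (1 - β) / 2 * welfare V P ≤ revenue V Q) := by
  obtain rfl : Vtot = wonValue V P win := funext hVtot
  subst hVstar
  obtain ⟨Q, hQK, hQ⟩ := exists_kAnonymous_welfare_sub_le_two_mul_revenue hV hP hwin
  exact ⟨⟨Q, hQK, by linarith⟩, fun β _ _ hβ => ⟨Q, hQK, by linarith⟩⟩

/-- Let `P` be a `K`-anonymous scheme with welfare `W`,
for each bundle choose a winner `win b` attaining the maximum value, let
`Vtot i` be the total value of the bundles won by bidder `i`, and let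
`Vstar = max_i Vtot i`.  Then some `K`-anonymous scheme has revenue at least
`(W - Vstar) / 2`; in particular, if `Vstar ≤ β·W` with `0 < β < 1`, some
`K`-anonymous scheme has revenue at least `((1 - β)/2)·W`. -/
theorem stmt11 (n m K : ℕ) (hn : 2 ≤ n)
    (V : Fin n → Fin m → ℝ) (hV : ∀ i j, 0 ≤ V i j)
    (P : Finpartition (univ : Finset (Fin m))) (hP : KAnonymous K P)
    (win : Finset (Fin m) → Fin n)
    (hwin : ∀ b ∈ P.parts, ∑ j ∈ b, V (win b) j = ⨆ i, ∑ j ∈ b, V i j)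
    (Vtot : Fin n → ℝ)
    (hVtot : ∀ i, Vtot i = ∑ b ∈ P.parts.filter (fun b => win b = i), ∑ j ∈ b, V i j)
    (Vstar : ℝ) (hVstar : Vstar = ⨆ i, Vtot i) :
    (∃ Q : Finpartition (univ : Finset (Fin m)),
      KAnonymous K Q ∧ (welfare V P - Vstar) / 2 ≤ revenue V Q) ∧
    (∀ β : ℝ, 0 < β → β < 1 → Vstar ≤ β * welfare V P →
      ∃ Q : Finpartition (univ : Finset (Fin m)),
        KAnonymous K Q ∧ (1 - β) / 2 * welfare V P ≤ revenue V Q) :=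
  stmt11_general n m K V hV P hP win hwin Vtot hVtot Vstar hVstar
end
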